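/- Let n = 2^m, let P^(ℓ) be the layer matrices of the CCC_n, and write P^{[i,j]} = P^(i) P^(i+1) ⋯ P^(j). Set t2 = log n and t1 = log n − log log n. Then for every wire w, (log n)·Σ_{i=1}^{t1} Σ_{(u,v)∈M^(i)} ( P^{[i+1,t2]}_{u,w} − P^{[i+1,t2]}_{v,w} )^2 ≤ 32, where M^(i) is the set of balancers (matched pairs) of layer i; equivalently the quantity Λ1 of the general upper bound is O(1) for the CCC_n. -/

import Mathlib

open MeasureTheory ProbabilityTheory
open scoped ENNReal

namespace BalNet

variable {n : ℕ}

/-- A matching given as a finset of ordered pairs `(u,v)` with `u < v`,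
pairwise vertex-disjoint. -/
def IsMatching (E : Finset (Fin n × Fin n)) : Prop :=
  (∀ e ∈ E, e.1 < e.2) ∧
    ∀ e ∈ E, ∀ e' ∈ E, e ≠ e' →
      e.1 ≠ e'.1 ∧ e.1 ≠ e'.2 ∧ e.2 ≠ e'.1 ∧ e.2 ≠ e'.2

/-- The balancing matrix `P` associated to a matching. -/
noncomputable def balMatrix (E : Finset (Fin n × Fin n)) : Matrix (Fin n) (Fin n) ℝ :=
  Matrix.of fun u v =>
    if u = v then (if ∃ e ∈ E, u = e.1 ∨ u = e.2 then (1 : ℝ)/2 else 1)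
    else if (u, v) ∈ E ∨ (v, u) ∈ E then 1/2 else 0

/-- One balancing round: every matched pair splits the sum of its loads as evenly as
possible; `pt e` is the endpoint of `e` receiving the excess token (if any). -/
noncomputable def balStep (E : Finset (Fin n × Fin n)) (pt : Fin n × Fin n → Fin n)
    (y : Fin n → ℤ) : Fin n → ℤ := fun v =>
  if h : ∃ e ∈ E, v = e.1 ∨ v = e.2 then
    if v = pt h.choose then Int.fdiv (y h.choose.1 + y h.choose.2 + 1) 2
    else Int.fdiv (y h.choose.1 + y h.choose.2) 2
  else y v

/-- The load vector after `t` rounds (matching `M i` and orientation `pt i` are used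
in round `i`, for `i = 1, 2, …`). -/
noncomputable def loads (M : ℕ → Finset (Fin n × Fin n)) (pt : ℕ → Fin n × Fin n → Fin n)
    (y0 : Fin n → ℤ) : ℕ → Fin n → ℤ
  | 0 => y0
  | t + 1 => balStep (M (t + 1)) (pt (t + 1)) (loads M pt y0 t)

/-- Ordered matrix product `P^{[i,j]} = P i * P (i+1) * ⋯ * P j`
(the identity matrix when `i > j`). -/
noncomputable def matProd (P : ℕ → Matrix (Fin n) (Fin n) ℝ) (i j : ℕ) :
    Matrix (Fin n) (Fin n) ℝ :=
  ((List.range' i (j + 1 - i)).map P).prod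

/-- The second largest eigenvalue in absolute value of a (symmetric doubly stochastic)
matrix: the supremum of `|μ|` over eigenvalues `μ` possessing an eigenvector orthogonal
to the all-ones vector. -/
noncomputable def lambda2 (A : Matrix (Fin n) (Fin n) ℝ) : ℝ :=
  sSup {r : ℝ | ∃ μ : ℝ, r = |μ| ∧
    ∃ x : Fin n → ℝ, x ≠ 0 ∧ (∑ i, x i) = 0 ∧ A.mulVec x = μ • x}

/-- The realized orientation after the perturbation: `up t e = true` means that the
balancer `e` of round `t` initially points to `e.1`, and `fl t e = true` means that it
is flipped; the result is the vertex receiving the excess token. -/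
def ptFrom (up fl : ℕ → Fin n × Fin n → Bool) : ℕ → Fin n × Fin n → Fin n :=
  fun t e => if up t e = fl t e then e.2 else e.1

end BalNet

open BalNet

/-- The layer-`ℓ` matching of the `CCC` network on `2^m` wires: two wires are joined
by a balancer iff their binary representations differ exactly in bit `ℓ`. -/
def cccMatching (m ℓ : ℕ) : Finset (Fin (2^m) × Fin (2^m)) :=
  Finset.univ.filter (fun e => e.1 < e.2 ∧ (e.1.val ^^^ e.2.val) = 2^(ℓ-1))

/-- The wire differing from `u` exactly in bit `ℓ`. -/
def partnerWire (m ℓ : ℕ) (u : Fin (2^m)) : Fin (2^m) :=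
  if h : u.val ^^^ 2^(ℓ-1) < 2^m then ⟨u.val ^^^ 2^(ℓ-1), h⟩ else u

/-- `reachWire m k ℓ u i`: starting from wire `u` just after layer `ℓ`, the wire `i`
can be reached by a path through the `k` consecutive layers `ℓ+1, …, ℓ+k`. -/
def reachWire (m : ℕ) : ℕ → ℕ → Fin (2^m) → Fin (2^m) → Prop
  | 0, _, u, i => u = i
  | k+1, ℓ, u, i =>
      reachWire m k (ℓ+1) u i ∨ reachWire m k (ℓ+1) (partnerWire m (ℓ+1) u) i

/-- A balancer `e` of layer `ℓ` affects the wire `i` at the position just after layer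
`ℓ'` (for `ℓ ≤ ℓ'`): there is a path through consecutive layers from `e` to `i`. -/
def balAffects (m ℓ : ℕ) (e : Fin (2^m) × Fin (2^m)) (ℓ' : ℕ) (i : Fin (2^m)) : Prop :=
  reachWire m (ℓ' - ℓ) ℓ e.1 i ∨ reachWire m (ℓ' - ℓ) ℓ e.2 i

/-- The top wire (wire number 1) of the `CCC`. -/
def topWire (m : ℕ) : Fin (2^m) := ⟨0, Nat.two_pow_pos m⟩

/-!
Each layer `ℓ` averages every wire with its partner in bit `ℓ - 1`, so `P^{[i+1,m]}` averages
over residue classes mod `2^i`: its entries are `2^i / n` on pairs of wires agreeing in their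
lowest `i` bits. For a matching, `∑ (x_u - x_v)^2 ≤ 2 ∑ x_u^2`, and a column of `P^{[i+1,m]}` has
squared norm `2^i / n`; hence layer `i` contributes at most `2^(i+1) / n`. The geometric sum up
to `t1 = m - ⌊log₂ m⌋` is below `2^(t1+2) / n`, and `m · 2^t1 ≤ 2n` because
`m < 2^(⌊log₂ m⌋ + 1)`, so the total is at most `8`.
-/

open Finset

namespace BalNet

lemma IsMatching.sum_sq_sub_le {n : ℕ} {E : Finset (Fin n × Fin n)} (hE : IsMatching E)
    (x : Fin n → ℝ) : ∑ e ∈ E, (x e.1 - x e.2) ^ 2 ≤ 2 * ∑ u, x u ^ 2 := by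
  have hfst : Set.InjOn Prod.fst E := fun e he e' he' h =>
    by_contra fun hne => (hE.2 e he e' he' hne).1 h
  have hsnd : Set.InjOn Prod.snd E := fun e he e' he' h =>
    by_contra fun hne => (hE.2 e he e' he' hne).2.2.2 h
  have hdisj : Disjoint (E.image Prod.fst) (E.image Prod.snd) := by
    simp only [disjoint_left, mem_image]
    rintro _ ⟨e, he, rfl⟩ ⟨e', he', h⟩
    by_cases hne : e = e'
    · subst hne; exact (hE.1 e he).ne h.symm
    · exact (hE.2 e he e' he' hne).2.1 h.symm
  calc ∑ e ∈ E, (x e.1 - x e.2) ^ 2 ≤ ∑ e ∈ E, 2 * (x e.1 ^ 2 + x e.2 ^ 2) :=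
        sum_le_sum fun e _ => by nlinarith [sq_nonneg (x e.1 + x e.2)]
    _ = 2 * ∑ u ∈ E.image Prod.fst ∪ E.image Prod.snd, x u ^ 2 := by
        rw [← mul_sum, sum_union hdisj, sum_image hfst, sum_image hsnd, sum_add_distrib]
    _ ≤ 2 * ∑ u, x u ^ 2 := by gcongr; exact subset_univ _

lemma matProd_of_lt {n : ℕ} (P : ℕ → Matrix (Fin n) (Fin n) ℝ) {i j : ℕ} (h : j < i) :
    matProd P i j = 1 := by
  simp [matProd, Nat.sub_eq_zero_of_le h]

lemma matProd_eq_mul {n : ℕ} (P : ℕ → Matrix (Fin n) (Fin n) ℝ) {i j : ℕ} (h : i ≤ j) :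
    matProd P i j = P i * matProd P (i + 1) j := by
  rw [matProd, matProd, show j + 1 - i = (j + 1 - (i + 1)) + 1 by omega, List.range'_succ,
    List.map_cons, List.prod_cons]

end BalNet

namespace Nat

lemma mod_two_pow_eq_iff_testBit (a b n : ℕ) :
    a % 2 ^ n = b % 2 ^ n ↔ ∀ i < n, a.testBit i = b.testBit i := by
  refine ⟨fun h i hi => ?_, fun h => eq_of_testBit_eq fun i => ?_⟩
  · simpa [testBit_mod_two_pow, hi] using congrArg (testBit · i) h
  · by_cases hi : i < n <;> simp [testBit_mod_two_pow, hi, h]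

lemma modEq_two_pow_succ_iff {a b j : ℕ} :
    a ≡ b [MOD 2 ^ (j + 1)] ↔ a ≡ b [MOD 2 ^ j] ∧ a.testBit j = b.testBit j := by
  simp only [ModEq, mod_two_pow_eq_iff_testBit, forall_lt_succ_right]

lemma xor_two_pow_modEq (a j : ℕ) : a ^^^ 2 ^ j ≡ a [MOD 2 ^ j] :=
  (mod_two_pow_eq_iff_testBit _ _ _).2 fun i hi => by
    simp [testBit_xor, hi.ne']

lemma testBit_xor_two_pow_self (a j : ℕ) : (a ^^^ 2 ^ j).testBit j = !a.testBit j := by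
  simp [testBit_xor]

end Nat

namespace CCC

lemma card_filter_modEq_two_pow {m j : ℕ} (hj : j ≤ m) (w : ℕ) :
    #{u : Fin (2 ^ m) | u.val ≡ w [MOD 2 ^ j]} = 2 ^ (m - j) := by
  have hcount : #{u : Fin (2 ^ m) | u.val ≡ w [MOD 2 ^ j]} =
      Nat.count (· ≡ w [MOD 2 ^ j]) (2 ^ m) := by
    rw [Nat.count_eq_card_filter_range, ← card_map Fin.valEmbedding]
    congr 1
    ext k
    simp only [mem_map, mem_filter, mem_univ, true_and, mem_range, Fin.valEmbedding_apply]
    exact ⟨fun ⟨u, hu, huk⟩ => huk ▸ ⟨u.isLt, hu⟩, fun ⟨hk, hkw⟩ => ⟨⟨k, hk⟩, hkw, rfl⟩⟩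
  rw [hcount, Nat.count_modEq_card _ (Nat.two_pow_pos j), Nat.pow_div hj two_pos,
    Nat.mod_eq_zero_of_dvd (Nat.pow_dvd_pow 2 hj)]
  simp

section partner

variable {m ℓ : ℕ}

lemma partnerWire_val (hℓ : ℓ - 1 < m) (u : Fin (2 ^ m)) :
    (partnerWire m ℓ u).val = u.val ^^^ 2 ^ (ℓ - 1) :=
  congrArg Fin.val
    (dif_pos (Nat.xor_lt_two_pow u.isLt (Nat.pow_lt_pow_right one_lt_two hℓ)))

lemma partnerWire_partnerWire (hℓ : ℓ - 1 < m) (u : Fin (2 ^ m)) :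
    partnerWire m ℓ (partnerWire m ℓ u) = u :=
  Fin.ext <| by rw [partnerWire_val hℓ, partnerWire_val hℓ, Nat.xor_assoc, Nat.xor_self,
    Nat.xor_zero]

lemma partnerWire_ne (hℓ : ℓ - 1 < m) (u : Fin (2 ^ m)) : partnerWire m ℓ u ≠ u := by
  intro h
  have := congrArg Fin.val h
  rw [partnerWire_val hℓ, xor_left_eq_self_iff] at this
  exact pow_ne_zero _ two_ne_zero this

lemma mem_cccMatching_iff (hℓ : ℓ - 1 < m) {e : Fin (2 ^ m) × Fin (2 ^ m)} :
    e ∈ cccMatching m ℓ ↔ e.1 < e.2 ∧ e.2 = partnerWire m ℓ e.1 := by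
  simp only [cccMatching, mem_filter, mem_univ, true_and, Fin.ext_iff, partnerWire_val hℓ,
    xor_eq_iff_right_eq]

lemma isMatching_cccMatching (hℓ : ℓ - 1 < m) : IsMatching (cccMatching m ℓ) := by
  simp only [IsMatching, mem_cccMatching_iff hℓ]
  refine ⟨fun e he => he.1, ?_⟩
  rintro ⟨a, b⟩ ⟨hab, hb⟩ ⟨a', b'⟩ ⟨hab', hb'⟩ hne
  dsimp only at hab hb hab' hb' ⊢
  subst hb hb'
  have := partnerWire_partnerWire hℓ a
  have := partnerWire_partnerWire hℓ a'
  refine ⟨?_, ?_, ?_, ?_⟩ <;> intro h <;> grind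

lemma balMatrix_cccMatching_apply (hℓ : ℓ - 1 < m) (u v : Fin (2 ^ m)) :
    balMatrix (cccMatching m ℓ) u v = if v = u ∨ v = partnerWire m ℓ u then 1 / 2 else 0 := by
  have hinv := partnerWire_partnerWire hℓ
  by_cases huv : u = v
  · subst huv
    have hmatched : ∃ e ∈ cccMatching m ℓ, u = e.1 ∨ u = e.2 := by
      simp only [mem_cccMatching_iff hℓ]
      rcases (partnerWire_ne hℓ u).lt_or_gt with h | h
      · exact ⟨(partnerWire m ℓ u, u), ⟨h, (hinv u).symm⟩, Or.inr rfl⟩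
      · exact ⟨(u, partnerWire m ℓ u), ⟨h, rfl⟩, Or.inl rfl⟩
    simp only [balMatrix, Matrix.of_apply, if_pos hmatched, true_or, if_true]
  · have hadj : (u, v) ∈ cccMatching m ℓ ∨ (v, u) ∈ cccMatching m ℓ ↔
        v = partnerWire m ℓ u := by
      simp only [mem_cccMatching_iff hℓ]
      have := partnerWire_ne hℓ u
      constructor
      · rintro (⟨-, h⟩ | ⟨-, h⟩) <;> grind
      · rintro rfl
        rcases this.lt_or_gt with h | h
        · exact Or.inr ⟨h, (hinv u).symm⟩
        · exact Or.inl ⟨h, rfl⟩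
    simp [balMatrix, huv, Ne.symm huv, hadj]

lemma balMatrix_cccMatching_mul_apply (hℓ : ℓ - 1 < m) (A : Matrix (Fin (2 ^ m)) (Fin (2 ^ m)) ℝ)
    (u w : Fin (2 ^ m)) :
    (balMatrix (cccMatching m ℓ) * A) u w = (A u w + A (partnerWire m ℓ u) w) / 2 := by
  have hne := (partnerWire_ne hℓ u).symm
  rw [Matrix.mul_apply, Fintype.sum_eq_add u (partnerWire m ℓ u) hne]
  · simp only [balMatrix_cccMatching_apply hℓ, true_or, or_true, if_true, hne.symm]
    ring
  · rintro v ⟨hvu, hvp⟩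
    simp [balMatrix_cccMatching_apply hℓ, hvu, hvp]

end partner

/-- The closed form of the paper's `P^{[j+1,m]}` for the `CCC`. -/
noncomputable def modAvg (m j : ℕ) : Matrix (Fin (2 ^ m)) (Fin (2 ^ m)) ℝ :=
  Matrix.of fun u v => if u.val ≡ v.val [MOD 2 ^ j] then 2 ^ j / 2 ^ m else 0

lemma modAvg_self (m : ℕ) : modAvg m m = 1 := by
  ext u v
  simp [modAvg, Nat.ModEq, Nat.mod_eq_of_lt u.isLt, Nat.mod_eq_of_lt v.isLt, Matrix.one_apply,
    Fin.ext_iff]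

lemma balMatrix_cccMatching_mul_modAvg {m j : ℕ} (hj : j < m) :
    balMatrix (cccMatching m (j + 1)) * modAvg m (j + 1) = modAvg m j := by
  ext u w
  have hℓ : j + 1 - 1 < m := by omega
  have hp : u.val ^^^ 2 ^ j ≡ w.val [MOD 2 ^ j] ↔ u.val ≡ w.val [MOD 2 ^ j] :=
    ⟨(Nat.xor_two_pow_modEq _ _).symm.trans, (Nat.xor_two_pow_modEq _ _).trans⟩
  rw [balMatrix_cccMatching_mul_apply hℓ]
  simp only [modAvg, Matrix.of_apply, Nat.modEq_two_pow_succ_iff, partnerWire_val hℓ,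
    Nat.add_sub_cancel, Nat.testBit_xor_two_pow_self, hp]
  by_cases h : u.val ≡ w.val [MOD 2 ^ j]
  · have hexactly_one : ∀ (b c : Bool) (x : ℝ),
        (if b = c then x else 0) + (if (!b) = c then x else 0) = x := by
      intro b c x
      cases b <;> cases c <;> simp
    simp only [h, true_and, if_true, hexactly_one, pow_succ]
    ring
  · simp [h]

lemma matProd_cccMatching_eq_modAvg {m i : ℕ} (hi : i ≤ m) :
    matProd (fun j => balMatrix (cccMatching m j)) (i + 1) m = modAvg m i := by
  induction hi using Nat.decreasingInduction with
  | self => rw [matProd_of_lt _ (Nat.lt_succ_self m), modAvg_self]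
  | of_succ j hj ih => rw [matProd_eq_mul _ hj, ih, balMatrix_cccMatching_mul_modAvg hj]

lemma sum_modAvg_sq {m j : ℕ} (hj : j ≤ m) (w : Fin (2 ^ m)) :
    ∑ u, modAvg m j u w ^ 2 = 2 ^ j / 2 ^ m := by
  simp only [modAvg, Matrix.of_apply, ite_pow, zero_pow two_ne_zero, sum_ite, sum_const_zero,
    add_zero, sum_const, card_filter_modEq_two_pow hj, nsmul_eq_mul]
  have hm : (2 : ℝ) ^ m = 2 ^ (m - j) * 2 ^ j := by rw [← pow_add, Nat.sub_add_cancel hj]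
  rw [hm]
  field_simp
  push_cast
  ring

lemma sum_cccMatching_sq_sub_modAvg_le {m i : ℕ} (hi : 1 ≤ i) (him : i ≤ m) (w : Fin (2 ^ m)) :
    ∑ e ∈ cccMatching m i, (modAvg m i e.1 w - modAvg m i e.2 w) ^ 2 ≤ 2 * 2 ^ i / 2 ^ m :=
  calc _ ≤ 2 * ∑ u, modAvg m i u w ^ 2 :=
        (isMatching_cccMatching (by omega)).sum_sq_sub_le _
    _ = 2 * 2 ^ i / 2 ^ m := by rw [sum_modAvg_sq him, mul_div_assoc]

lemma mul_two_pow_sub_log_le (m : ℕ) : m * 2 ^ (m - Nat.log 2 m) ≤ 2 * 2 ^ m := by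
  have hm : m < 2 * 2 ^ Nat.log 2 m := by
    simpa [pow_succ, mul_comm] using Nat.lt_pow_succ_log_self one_lt_two m
  calc m * 2 ^ (m - Nat.log 2 m) ≤ 2 * 2 ^ Nat.log 2 m * 2 ^ (m - Nat.log 2 m) := by gcongr
    _ = 2 * 2 ^ m := by rw [mul_assoc, ← pow_add, Nat.add_sub_cancel' (Nat.log_le_self 2 m)]

lemma mul_sum_Icc_two_pow_sub_log_le (m : ℕ) :
    (m : ℝ) * ∑ i ∈ Icc 1 (m - Nat.log 2 m), 2 * 2 ^ i / 2 ^ m ≤ 8 := by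
  set t := m - Nat.log 2 m
  have hgeom : ∑ i ∈ Icc 1 t, 2 ^ i < 2 ^ (t + 1) :=
    Nat.geomSum_lt le_rfl fun k hk => Nat.lt_succ_of_le (mem_Icc.1 hk).2
  have hnat : m * (2 * ∑ i ∈ Icc 1 t, 2 ^ i) ≤ 8 * 2 ^ m :=
    calc m * (2 * ∑ i ∈ Icc 1 t, 2 ^ i) ≤ m * (2 * 2 ^ (t + 1)) := by gcongr
      _ = 4 * (m * 2 ^ t) := by ring
      _ ≤ 4 * (2 * 2 ^ m) := Nat.mul_le_mul_left 4 (mul_two_pow_sub_log_le m)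
      _ = 8 * 2 ^ m := by ring
  rw [← sum_div, ← mul_sum, mul_div_assoc', div_le_iff₀ (by positivity)]
  exact_mod_cast hnat

end CCC

open CCC in
theorem stmt17_ccc_lambda1_bound_general
    (m : ℕ) (w : Fin (2^m)) :
    (m : ℝ) * ∑ i ∈ Finset.Icc 1 (m - Nat.log 2 m), ∑ e ∈ cccMatching m i,
      ((matProd (fun j => balMatrix (cccMatching m j)) (i+1) m) e.1 w -
       (matProd (fun j => balMatrix (cccMatching m j)) (i+1) m) e.2 w) ^ 2 ≤ 32 := by
  calc _ ≤ (m : ℝ) * ∑ i ∈ Finset.Icc 1 (m - Nat.log 2 m), 2 * 2 ^ i / 2 ^ m := by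
        gcongr with i hi
        obtain ⟨hi1, hit⟩ := mem_Icc.1 hi
        have him : i ≤ m := hit.trans (Nat.sub_le _ _)
        rw [matProd_cccMatching_eq_modAvg him]
        exact sum_cccMatching_sq_sub_modAvg_le hi1 him w
    _ ≤ 8 := mul_sum_Icc_two_pow_sub_log_le m
    _ ≤ 32 := by norm_num

/-- For the `CCC` on `n = 2^m` wires, with `t2 = log n = m` and
`t1 = log n - log log n = m - ⌊log₂ m⌋`, the quantity `Λ1²/… ` of the general upper
bound satisfies, for every wire `w`,
`(log n) Σ_{i=1}^{t1} Σ_{(u,v) ∈ M^(i)} (P^{[i+1,t2]}_{u,w} - P^{[i+1,t2]}_{v,w})² ≤ 32`. -/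
theorem stmt17_ccc_lambda1_bound
    (m : ℕ) (hm : 1 ≤ m) (w : Fin (2^m)) :
    (m : ℝ) * ∑ i ∈ Finset.Icc 1 (m - Nat.log 2 m), ∑ e ∈ cccMatching m i,
      ((matProd (fun j => balMatrix (cccMatching m j)) (i+1) m) e.1 w -
       (matProd (fun j => balMatrix (cccMatching m j)) (i+1) m) e.2 w) ^ 2 ≤ 32 :=
  stmt17_ccc_lambda1_bound_general m w
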